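/- arXiv:gr-qc/0510052 — 3 statements merged into one kernel-verified Lean document; each statement's English description precedes it below -/
import Mathlib

section
/- Let n and m be nonempty finite types, let C and D be finite types, and let {E_c}_{c∈C} and {F_d}_{d∈D} be families of m×n matrices over ℂ. If Σ_{c∈C} E_c ρ E_c† = Σ_{d∈D} F_d ρ F_d† for every ρ ∈ Matrix n n ℂ (i.e., the two families implement the same completely positive map), then there exists a scalar matrix u : C → D → ℂ such that E_c = Σ_{d∈D} u(c,d) • F_d for all c ∈ C. -/
open Matrix BigOperators

/-!
Evaluating both sides at the matrix unit `ρ = single i j 1` shows that the two families have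
the same Gram data `∑ c, E c a i * conj (E c b j)`. This data determines
`∑ c, |φ (E c)|²` for every linear functional `φ`, so a functional vanishing on all `F d`
vanishes on every `E c`, which puts each `E c` in the span of the `F d`.
-/

open Module Submodule Set ComplexConjugate

section

variable {𝕜 V ι C D : Type*} [RCLike 𝕜] [AddCommGroup V] [Module 𝕜 V]
  [Fintype ι] [Fintype C] [Fintype D]

theorem Module.Basis.sum_dual_apply_mul_conj (b : Basis ι 𝕜 V) (φ : Dual 𝕜 V) (v : C → V) :
    ∑ c, φ (v c) * conj (φ (v c)) =
      ∑ k, ∑ l, φ (b k) * conj (φ (b l)) * ∑ c, b.repr (v c) k * conj (b.repr (v c) l) := by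
  have expand : ∀ c, φ (v c) = ∑ k, b.repr (v c) k * φ (b k) := fun c => by
    conv_lhs => rw [← b.sum_repr (v c)]
    simp only [map_sum, map_smul, smul_eq_mul]
  simp_rw [expand, map_sum, map_mul, Finset.sum_mul_sum, Finset.mul_sum]
  rw [Finset.sum_comm]
  refine Finset.sum_congr rfl fun k _ => ?_
  rw [Finset.sum_comm]
  exact Finset.sum_congr rfl fun l _ => Finset.sum_congr rfl fun c _ => by ring

theorem mem_span_range_of_sum_dual_apply_mul_conj_eq (v : C → V) (w : D → V)
    (h : ∀ φ : Dual 𝕜 V, ∑ c, φ (v c) * conj (φ (v c)) = ∑ d, φ (w d) * conj (φ (w d)))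
    (c : C) : v c ∈ span 𝕜 (range w) := by
  by_contra hc
  obtain ⟨φ, hφc, hφw⟩ := exists_dual_map_eq_bot_of_notMem hc inferInstance
  have hφw' : ∀ d, φ (w d) = 0 := fun d =>
    (mem_bot 𝕜).mp (hφw ▸ mem_map_of_mem (subset_span ⟨d, rfl⟩))
  have hsum : ∑ c, ‖φ (v c)‖ ^ 2 = 0 := by
    have := h φ
    simp only [hφw', map_zero, mul_zero, Finset.sum_const_zero, RCLike.mul_conj] at this
    exact_mod_cast this
  rw [Finset.sum_eq_zero_iff_of_nonneg fun _ _ => sq_nonneg _] at hsum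
  exact hφc (by simpa using hsum c (Finset.mem_univ c))

theorem Module.Basis.mem_span_range_of_gram_repr_eq (b : Basis ι 𝕜 V) (v : C → V) (w : D → V)
    (h : ∀ k l, ∑ c, b.repr (v c) k * conj (b.repr (v c) l) =
      ∑ d, b.repr (w d) k * conj (b.repr (w d) l))
    (c : C) : v c ∈ span 𝕜 (range w) :=
  mem_span_range_of_sum_dual_apply_mul_conj_eq v w
    (fun φ => by simp only [b.sum_dual_apply_mul_conj, h]) c

end

theorem Matrix.mul_single_mul_apply {α l m n o : Type*} [NonUnitalNonAssocSemiring α]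
    [Fintype m] [Fintype n] [DecidableEq m] [DecidableEq n]
    (A : Matrix l m α) (i : m) (j : n) (x : α) (B : Matrix n o α) (a : l) (b : o) :
    (A * single i j x * B) a b = A a i * x * B j b := by
  simp [mul_apply, single, ite_and]

theorem kraus_families_related_by_scalar_matrix_general
    {n m C D : Type*} [Fintype n] [Fintype m] [Fintype C] [Fintype D]
    [DecidableEq n]
    (E : C → Matrix m n ℂ) (F : D → Matrix m n ℂ)
    (h : ∀ ρ : Matrix n n ℂ,
      ∑ c, E c * ρ * (E c)ᴴ = ∑ d, F d * ρ * (F d)ᴴ) :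
    ∃ u : C → D → ℂ, ∀ c, E c = ∑ d, u c d • F d := by
  have hgram : ∀ (k l : m × n), ∑ c, E c k.1 k.2 * conj (E c l.1 l.2) =
      ∑ d, F d k.1 k.2 * conj (F d l.1 l.2) := fun k l => by
    simpa only [Matrix.sum_apply, mul_single_mul_apply, mul_one, conjTranspose_apply, RCLike.star_def]
      using congrFun₂ (h (single k.2 l.2 1)) k.1 l.1
  have hspan c := (stdBasis ℂ m n).mem_span_range_of_gram_repr_eq E F hgram c
  choose u hu using fun c => (mem_span_range_iff_exists_fun ℂ).mp (hspan c)
  exact ⟨u, fun c => (hu c).symm⟩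

/-- If two families of Kraus operators `{E c}` and `{F d}`
implement the same completely positive map, then there is a scalar matrix
`u` such that `E c = ∑ d, u c d • F d` for all `c`. -/
theorem kraus_families_related_by_scalar_matrix
    {n m C D : Type*} [Fintype n] [Fintype m] [Fintype C] [Fintype D]
    [DecidableEq n] [DecidableEq m] [Nonempty n] [Nonempty m]
    (E : C → Matrix m n ℂ) (F : D → Matrix m n ℂ)
    (h : ∀ ρ : Matrix n n ℂ,
      ∑ c, E c * ρ * (E c)ᴴ = ∑ d, F d * ρ * (F d)ᴴ) :
    ∃ u : C → D → ℂ, ∀ c, E c = ∑ d, u c d • F d :=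
  kraus_families_related_by_scalar_matrix_general E F h
end

section
/- Let Φ be a quantum channel on I = (a × b) ⊕ k and let U ∈ Matrix b b ℂ be unitary. Then B is U-invariant under Φ if and only if for every σ^B ∈ Matrix b b ℂ there exists τ^A ∈ Matrix a a ℂ such that Φ(emb(1^A, σ^B)) = emb(τ^A, U σ^B U†). (That is, it suffices to verify the invariance condition with the identity on the A factor.) -/
/-!
Write each Kraus operator in block form `E_c = [[A_c, _], [G_c, _]]` with respect to
`(a × b) ⊕ k`. The hypothesis at `σB = 1` gives `∑ G_c G_cᴴ = 0`, so by positivity every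
`G_c` vanishes.
For `F_c = (1 ⊗ Uᴴ) A_c` the hypothesis becomes `∑ F_c (1 ⊗ σ) F_cᴴ = τ_σ ⊗ σ` for all `σ`.
Viewing `F_c` as a `b × b` array of `a × a` blocks `F_c^{ij}`, the matrix units `σ = E_jj`
force `∑_c F_c^{ij} (F_c^{ij})ᴴ = 0` for `i ≠ j`, and the all-ones `σ` then gives
`∑_c F_c^{ii} (F_c^{jj})ᴴ = τ` for all `i, j`, whence `∑_c (F_c^{ii} - F_c^{jj})(⋯)ᴴ = 0`.
So `F_c = K_c ⊗ 1`, i.e. `A_c = K_c ⊗ U`, and `Φ (emb σA σB) = emb (∑ K_c σA K_cᴴ) (U σB Uᴴ)`.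
-/

open Matrix Kronecker BigOperators

section

variable {a b k : Type*} [Fintype a] [Fintype b] [Fintype k]
  [DecidableEq a] [DecidableEq b] [DecidableEq k]

/-- The embedding of `σA ⊗ σB` into the `(a × b) ⊕ k`-indexed matrices:
the entry at `((x,i),(y,j))` (both in the `a × b` summand) is
`σA x y * σB i j`, and all other entries vanish. -/
noncomputable def emb (σA : Matrix a a ℂ) (σB : Matrix b b ℂ) :
    Matrix ((a × b) ⊕ k) ((a × b) ⊕ k) ℂ :=
  Matrix.fromBlocks (σA ⊗ₖ σB) 0 0 0

namespace Matrix

variable {R l m n o p q C : Type*} [Fintype C]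

theorem sum_mul_conjTranspose_self_eq_zero [Fintype m] [Fintype n] [Ring R] [PartialOrder R]
    [StarRing R] [StarOrderedRing R] [NoZeroDivisors R] (M : C → Matrix m n R)
    (h : ∑ c, M c * (M c)ᴴ = 0) (c : C) : M c = 0 := by
  rw [← trace_mul_conjTranspose_self_eq_zero_iff]
  have htrace := congrArg trace h
  rw [trace_sum, trace_zero] at htrace
  exact (Finset.sum_eq_zero_iff_of_nonneg fun c _ =>
    (posSemidef_self_mul_conjTranspose (M c)).trace_nonneg).1 htrace c (Finset.mem_univ c)

theorem sum_mul_fromBlocks_zero_mul_conjTranspose [Fintype m] [Fintype n] [Semiring R]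
    [StarRing R] (E : C → Matrix (m ⊕ n) (m ⊕ n) R) (σ : Matrix m m R) :
    ∑ c, E c * fromBlocks σ 0 0 0 * (E c)ᴴ =
      fromBlocks (∑ c, (E c).toBlocks₁₁ * σ * (E c).toBlocks₁₁ᴴ)
        (∑ c, (E c).toBlocks₁₁ * σ * (E c).toBlocks₂₁ᴴ)
        (∑ c, (E c).toBlocks₂₁ * σ * (E c).toBlocks₁₁ᴴ)
        (∑ c, (E c).toBlocks₂₁ * σ * (E c).toBlocks₂₁ᴴ) := by
  conv_lhs => enter [2, c]; rw [← fromBlocks_toBlocks (E c)]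
  ext (x | x) (y | y) <;>
    simp [fromBlocks_conjTranspose, fromBlocks_multiply, sum_apply, Matrix.mul_assoc]

theorem sum_kronecker [NonUnitalNonAssocSemiring R] (A : C → Matrix l m R) (B : Matrix n p R) :
    (∑ c, A c) ⊗ₖ B = ∑ c, A c ⊗ₖ B := by
  ext
  simp [sum_apply, Finset.sum_mul]

def kronBlock (M : Matrix (m × n) (o × p) R) (i : n) (j : p) : Matrix m o R :=
  M.submatrix (·, i) (·, j)

theorem ext_kronBlock {M N : Matrix (m × n) (o × p) R}
    (h : ∀ i j, kronBlock M i j = kronBlock N i j) : M = N := by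
  ext ⟨x, i⟩ ⟨y, j⟩
  exact congrFun₂ (h i j) x y

theorem kronBlock_sum [AddCommMonoid R] (M : C → Matrix (m × n) (o × p) R) (i : n) (j : p) :
    kronBlock (∑ c, M c) i j = ∑ c, kronBlock (M c) i j := by
  ext
  simp [kronBlock, sum_apply]

theorem kronBlock_mul [Fintype o] [Fintype p] [NonUnitalNonAssocSemiring R]
    (M : Matrix (m × n) (o × p) R) (N : Matrix (o × p) (l × q) R) (i : n) (j : q) :
    kronBlock (M * N) i j = ∑ r, kronBlock M i r * kronBlock N r j := by
  ext
  simp only [kronBlock, submatrix_apply, mul_apply, sum_apply, Fintype.sum_prod_type]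
  exact Finset.sum_comm

theorem kronBlock_conjTranspose [Star R] (M : Matrix (m × n) (o × p) R) (i : p) (j : n) :
    kronBlock Mᴴ i j = (kronBlock M j i)ᴴ :=
  rfl

theorem kronBlock_kronecker [CommMagma R] (A : Matrix m o R) (B : Matrix n p R) (i : n) (j : p) :
    kronBlock (A ⊗ₖ B) i j = B i j • A := by
  ext
  simp [kronBlock, mul_comm]

theorem kronBlock_sum_mul_one_kronecker_mul_conjTranspose [Fintype m] [Fintype n]
    [DecidableEq m] [CommSemiring R] [StarRing R] (F : C → Matrix (m × n) (m × n) R)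
    (σ : Matrix n n R) (i j : n) :
    kronBlock (∑ c, F c * (1 ⊗ₖ σ) * (F c)ᴴ) i j =
      ∑ c, ∑ s, ∑ r, σ r s • (kronBlock (F c) i r * (kronBlock (F c) j s)ᴴ) := by
  simp only [kronBlock_sum, kronBlock_mul, kronBlock_conjTranspose, kronBlock_kronecker,
    Finset.sum_mul, Matrix.mul_smul, Matrix.smul_mul, Matrix.mul_one]

theorem exists_eq_kronecker_one_of_sum_conj [Fintype m] [Fintype n] [DecidableEq m]
    [DecidableEq n] [Nonempty n] [CommRing R] [PartialOrder R] [StarRing R] [StarOrderedRing R]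
    [NoZeroDivisors R] (F : C → Matrix (m × n) (m × n) R)
    (h : ∀ σ : Matrix n n R, ∃ τ, ∑ c, F c * (1 ⊗ₖ σ) * (F c)ᴴ = τ ⊗ₖ σ) :
    ∃ K : C → Matrix m m R, ∀ c, F c = K c ⊗ₖ 1 := by
  have hoff : ∀ c i j, i ≠ j → kronBlock (F c) i j = 0 := by
    intro c i j hij
    obtain ⟨τ, hτ⟩ := h (single j j 1)
    refine sum_mul_conjTranspose_self_eq_zero (fun c => kronBlock (F c) i j) ?_ c
    simpa [kronBlock_sum_mul_one_kronecker_mul_conjTranspose, kronBlock_kronecker, single_apply,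
      ite_and, Ne.symm hij] using congrArg (kronBlock · i i) hτ
  obtain ⟨τ, hτ⟩ := h (of fun _ _ => 1)
  have hdiag : ∀ i j, ∑ c, kronBlock (F c) i i * (kronBlock (F c) j j)ᴴ = τ := by
    intro i j
    have hij := congrArg (kronBlock · i j) hτ
    simp only [kronBlock_sum_mul_one_kronecker_mul_conjTranspose, kronBlock_kronecker, of_apply,
      one_smul] at hij
    rw [← hij]
    refine Finset.sum_congr rfl fun c _ => ?_
    rw [Fintype.sum_eq_single j fun s hs => by simp [hoff c j s (Ne.symm hs)],
      Fintype.sum_eq_single i fun r hr => by simp [hoff c i r (Ne.symm hr)]]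
  have hconst : ∀ c i j, kronBlock (F c) i i = kronBlock (F c) j j := fun c i j =>
    sub_eq_zero.1 <| sum_mul_conjTranspose_self_eq_zero
      (fun c => kronBlock (F c) i i - kronBlock (F c) j j)
      (by simp [sub_mul, mul_sub, Finset.sum_sub_distrib, hdiag]) c
  let i₀ := Classical.arbitrary n
  refine ⟨fun c => kronBlock (F c) i₀ i₀, fun c => ext_kronBlock fun i j => ?_⟩
  rw [kronBlock_kronecker, one_apply]
  split_ifs with hij
  · rw [hij, one_smul, hconst]
  · rw [zero_smul, hoff c i j hij]

theorem exists_eq_kronecker_of_sum_conj [Fintype m] [Fintype n] [DecidableEq m]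
    [DecidableEq n] [Nonempty n] [CommRing R] [PartialOrder R] [StarRing R] [StarOrderedRing R]
    [NoZeroDivisors R] (A : C → Matrix (m × n) (m × n) R) {U : Matrix n n R}
    (hU : U ∈ unitaryGroup n R)
    (h : ∀ σ : Matrix n n R, ∃ τ, ∑ c, A c * (1 ⊗ₖ σ) * (A c)ᴴ = τ ⊗ₖ (U * σ * Uᴴ)) :
    ∃ K : C → Matrix m m R, ∀ c, A c = K c ⊗ₖ U := by
  have hUU : Uᴴ * U = 1 := mem_unitaryGroup_iff'.mp hU
  have hW : (1 ⊗ₖ U) * (1 ⊗ₖ Uᴴ) = (1 : Matrix (m × n) (m × n) R) := by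
    rw [← mul_kronecker_mul, Matrix.one_mul, show U * Uᴴ = 1 from mem_unitaryGroup_iff.mp hU,
      one_kronecker_one]
  obtain ⟨K, hK⟩ := exists_eq_kronecker_one_of_sum_conj (fun c => (1 ⊗ₖ Uᴴ) * A c) fun σ => by
    obtain ⟨τ, hτ⟩ := h σ
    refine ⟨τ, ?_⟩
    calc ∑ c, (1 ⊗ₖ Uᴴ) * A c * (1 ⊗ₖ σ) * ((1 ⊗ₖ Uᴴ) * A c)ᴴ
        = (1 ⊗ₖ Uᴴ) * (∑ c, A c * (1 ⊗ₖ σ) * (A c)ᴴ) * (1 ⊗ₖ U) := by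
          simp only [Finset.mul_sum, Finset.sum_mul, conjTranspose_mul, conjTranspose_kronecker,
            conjTranspose_one, conjTranspose_conjTranspose, Matrix.mul_assoc]
      _ = τ ⊗ₖ (Uᴴ * U * σ * (Uᴴ * U)) := by
          rw [hτ, ← mul_kronecker_mul, ← mul_kronecker_mul, Matrix.one_mul, Matrix.mul_one]
          simp only [Matrix.mul_assoc]
      _ = τ ⊗ₖ σ := by rw [hUU, Matrix.one_mul, Matrix.mul_one]
  refine ⟨K, fun c => ?_⟩
  calc A c = (1 ⊗ₖ U) * ((1 ⊗ₖ Uᴴ) * A c) := by rw [← Matrix.mul_assoc, hW, Matrix.one_mul]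
    _ = K c ⊗ₖ U := by rw [hK, ← mul_kronecker_mul, Matrix.one_mul, Matrix.mul_one]

end Matrix

open scoped ComplexOrder

theorem U_invariant_iff_identity_on_A_general
    {C : Type*} [Fintype C] [Nonempty b]
    (Φ : Matrix ((a × b) ⊕ k) ((a × b) ⊕ k) ℂ →
         Matrix ((a × b) ⊕ k) ((a × b) ⊕ k) ℂ)
    (E : C → Matrix ((a × b) ⊕ k) ((a × b) ⊕ k) ℂ)
    (hΦ : ∀ ρ, Φ ρ = ∑ c, E c * ρ * (E c)ᴴ)
    (U : Matrix b b ℂ) (hU : U ∈ Matrix.unitaryGroup b ℂ) :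
    (∀ (σA : Matrix a a ℂ) (σB : Matrix b b ℂ),
        ∃ τA : Matrix a a ℂ, Φ (emb σA σB) = emb τA (U * σB * Uᴴ)) ↔
    (∀ σB : Matrix b b ℂ,
        ∃ τA : Matrix a a ℂ, Φ (emb 1 σB) = emb τA (U * σB * Uᴴ)) := by
  refine ⟨fun h σB => h 1 σB, fun h σA σB => ?_⟩
  set A := fun c => (E c).toBlocks₁₁
  set G := fun c => (E c).toBlocks₂₁
  have hΦemb : ∀ σA σB, Φ (emb σA σB) = fromBlocks (∑ c, A c * (σA ⊗ₖ σB) * (A c)ᴴ)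
      (∑ c, A c * (σA ⊗ₖ σB) * (G c)ᴴ) (∑ c, G c * (σA ⊗ₖ σB) * (A c)ᴴ)
      (∑ c, G c * (σA ⊗ₖ σB) * (G c)ᴴ) := fun σA σB =>
    (hΦ _).trans (sum_mul_fromBlocks_zero_mul_conjTranspose E (σA ⊗ₖ σB))
  have hblocks : ∀ σB, ∃ τA,
      ∑ c, A c * ((1 : Matrix a a ℂ) ⊗ₖ σB) * (A c)ᴴ = τA ⊗ₖ (U * σB * Uᴴ) ∧
      ∑ c, G c * ((1 : Matrix a a ℂ) ⊗ₖ σB) * (G c)ᴴ = 0 := fun σB => by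
    obtain ⟨τA, hτA⟩ := h σB
    rw [hΦemb, emb, fromBlocks_inj] at hτA
    exact ⟨τA, hτA.1, hτA.2.2.2⟩
  have hG : ∀ c, G c = 0 :=
    sum_mul_conjTranspose_self_eq_zero _ (by simpa using (hblocks 1).choose_spec.2)
  obtain ⟨K, hK⟩ := exists_eq_kronecker_of_sum_conj A hU fun σB =>
    (hblocks σB).imp fun _ => And.left
  refine ⟨∑ c, K c * σA * (K c)ᴴ, ?_⟩
  rw [hΦemb, emb]
  simp [hG, hK, sum_kronecker, conjTranspose_kronecker, mul_kronecker_mul]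

/-- For a quantum channel `Φ` on `I = (a × b) ⊕ k` and a
unitary `U` on `b`, subsystem `B` is `U`-invariant under `Φ` iff the defining
condition holds with the identity on the `A` factor. -/
theorem U_invariant_iff_identity_on_A
    {C : Type*} [Fintype C] [Nonempty a] [Nonempty b] [Nonempty k]
    (Φ : Matrix ((a × b) ⊕ k) ((a × b) ⊕ k) ℂ →
         Matrix ((a × b) ⊕ k) ((a × b) ⊕ k) ℂ)
    (E : C → Matrix ((a × b) ⊕ k) ((a × b) ⊕ k) ℂ)
    (hΦ : ∀ ρ, Φ ρ = ∑ c, E c * ρ * (E c)ᴴ)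
    (hE : ∑ c, (E c)ᴴ * E c = 1)
    (U : Matrix b b ℂ) (hU : U ∈ Matrix.unitaryGroup b ℂ) :
    (∀ (σA : Matrix a a ℂ) (σB : Matrix b b ℂ),
        ∃ τA : Matrix a a ℂ, Φ (emb σA σB) = emb τA (U * σB * Uᴴ)) ↔
    (∀ σB : Matrix b b ℂ,
        ∃ τA : Matrix a a ℂ, Φ (emb 1 σB) = emb τA (U * σB * Uᴴ)) :=
  U_invariant_iff_identity_on_A_general Φ E hΦ U hU

end
end

section
/- Let Φ be a quantum channel on I = (a × b) ⊕ k and let U ∈ Matrix b b ℂ be unitary. Then B is U-invariant under Φ if and only if Tr_A ∘ 𝒫 ∘ Φ ∘ 𝒫 = 𝒰 ∘ Tr_A ∘ 𝒫 as maps from I×I matrices to b×b matrices, where 𝒰(σ) = U σ U†. -/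
/-!
The right-hand side is dual to the identity
`∑ c, (E c P)ᴴ (1 ⊗ U Y Uᴴ) (E c P) = 1 ⊗ Y` for all `Y`, because `Tr_A` is the adjoint of
`Y ↦ 1 ⊗ Y` for the trace pairing. Together with `∑ c, (E c)ᴴ E c = 1` this identity makes
`∑ c, ‖E c P (1 ⊗ Y) - (1 ⊗ U Y Uᴴ) E c P‖²` vanish, so every `E c P` intertwines `1 ⊗ Y` with
`1 ⊗ U Y Uᴴ`. As the commutant of `1 ⊗ Mat_b` is `Mat_a ⊗ 1`, this gives `E c P = G c ⊗ U`, and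
then `Φ (σA ⊗ σB) = (∑ c, G c σA (G c)ᴴ) ⊗ U σB Uᴴ`.

Conversely, if `Φ (σA ⊗ σB) = τA ⊗ U σB Uᴴ`, trace preservation gives `Tr τA = Tr σA` whenever
`Tr σB ≠ 0`, and additivity in `σB` extends `Tr_A (Φ (σA ⊗ σB)) = Tr σA • U σB Uᴴ` to all `σB`;
the identity for general `ρ` follows since `P ρ P` is a sum of such tensors.
-/

open Matrix Kronecker BigOperators

section

variable {a b k : Type*} [Fintype a] [Fintype b] [Fintype k]
  [DecidableEq a] [DecidableEq b] [DecidableEq k]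

/-- The projection onto the `a × b` summand. -/
noncomputable def Pm : Matrix ((a × b) ⊕ k) ((a × b) ⊕ k) ℂ :=
  Matrix.fromBlocks 1 0 0 0

/-- The partial trace over the `A` subsystem. -/
noncomputable def trA (M : Matrix ((a × b) ⊕ k) ((a × b) ⊕ k) ℂ) :
    Matrix b b ℂ :=
  fun i j => ∑ x : a, M (Sum.inl (x, i)) (Sum.inl (x, j))

end

section KrausMap

variable {n C R : Type*} [Fintype n] [Fintype C] [CommSemiring R]

lemma trace_mul_sandwich (P M X : Matrix n n R) :
    (M * (P * X * P)).trace = (P * M * P * X).trace := by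
  rw [← Matrix.mul_assoc, trace_mul_comm]
  simp only [Matrix.mul_assoc]

variable [StarRing R]

def krausMap (E : C → Matrix n n R) : Matrix n n R →ₗ[R] Matrix n n R where
  toFun ρ := ∑ c, E c * ρ * (E c)ᴴ
  map_add' ρ σ := by simp only [Matrix.mul_add, Matrix.add_mul, Finset.sum_add_distrib]
  map_smul' z ρ := by
    simp only [Matrix.mul_smul, Matrix.smul_mul, Finset.smul_sum, RingHom.id_apply]

lemma krausMap_apply (E : C → Matrix n n R) (ρ : Matrix n n R) :
    krausMap E ρ = ∑ c, E c * ρ * (E c)ᴴ := rfl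

lemma trace_krausMap_mul (E : C → Matrix n n R) (ρ X : Matrix n n R) :
    (krausMap E ρ * X).trace = (ρ * ∑ c, (E c)ᴴ * X * E c).trace := by
  simp only [krausMap_apply, Finset.sum_mul, Finset.mul_sum, Matrix.trace_sum]
  refine Finset.sum_congr rfl fun c _ => ?_
  rw [Matrix.mul_assoc, Matrix.mul_assoc, trace_mul_comm]
  simp only [Matrix.mul_assoc]

lemma trace_krausMap [DecidableEq n] {E : C → Matrix n n R} (hE : ∑ c, (E c)ᴴ * E c = 1)
    (ρ : Matrix n n R) : (krausMap E ρ).trace = ρ.trace := by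
  simpa [hE] using trace_krausMap_mul E ρ 1

end KrausMap

section Intertwining

open scoped ComplexOrder

variable {m n C 𝕜 : Type*} [Fintype m] [Fintype n] [Fintype C] [RCLike 𝕜]

lemma eq_zero_of_sum_conjTranspose_mul_self_eq_zero {A : C → Matrix m n 𝕜}
    (h : ∑ c, (A c)ᴴ * A c = 0) (c : C) : A c = 0 := by
  have hnonneg : ∀ c ∈ Finset.univ, 0 ≤ ((A c)ᴴ * A c).trace :=
    fun c _ => (posSemidef_conjTranspose_mul_self (A c)).trace_nonneg
  have htrace : ∑ c, ((A c)ᴴ * A c).trace = 0 := by rw [← trace_sum, h, trace_zero]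
  exact trace_conjTranspose_mul_self_eq_zero_iff.1
    ((Finset.sum_eq_zero_iff_of_nonneg hnonneg).1 htrace c (Finset.mem_univ c))

lemma mul_eq_mul_of_sum_conjTranspose_mul {L : C → Matrix m n 𝕜} {X : Matrix n n 𝕜}
    {X' : Matrix m m 𝕜} (hL : (∑ c, (L c)ᴴ * L c) * X = X)
    (hX : ∑ c, (L c)ᴴ * X' * L c = X) (hXX : ∑ c, (L c)ᴴ * (X'ᴴ * X') * L c = Xᴴ * X)
    (c : C) : L c * X = X' * L c := by
  have hX_star : ∑ c, (L c)ᴴ * X'ᴴ * L c = Xᴴ := by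
    rw [← hX, conjTranspose_sum]
    simp only [conjTranspose_mul, conjTranspose_conjTranspose, Matrix.mul_assoc]
  have hsum : ∑ c, (L c * X - X' * L c)ᴴ * (L c * X - X' * L c) = 0 :=
    calc ∑ c, (L c * X - X' * L c)ᴴ * (L c * X - X' * L c)
        = Xᴴ * ((∑ c, (L c)ᴴ * L c) * X) - Xᴴ * ∑ c, (L c)ᴴ * X' * L c
          - (∑ c, (L c)ᴴ * X'ᴴ * L c) * X + ∑ c, (L c)ᴴ * (X'ᴴ * X') * L c := by
          simp only [conjTranspose_sub, conjTranspose_mul, Matrix.sub_mul, Matrix.mul_sub,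
            Finset.sum_sub_distrib, Finset.mul_sum, Finset.sum_mul, Matrix.mul_assoc]
          abel
      _ = 0 := by rw [hL, hX, hX_star, hXX, sub_self, zero_sub, neg_add_cancel]
  exact sub_eq_zero.1 (eq_zero_of_sum_conjTranspose_mul_self_eq_zero hsum c)

end Intertwining

lemma AddMonoidHom.eq_zero_of_forall_trace_ne_zero {n K M : Type*} [Fintype n] [DecidableEq n]
    [Ring K] [CharZero K] [AddGroup M] (f : Matrix n n K →+ M)
    (hf : ∀ X, X.trace ≠ 0 → f X = 0) (X : Matrix n n K) : f X = 0 := by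
  cases isEmpty_or_nonempty n
  · rw [Subsingleton.elim X 0, map_zero]
  have h₁ : (1 : Matrix n n K).trace ≠ 0 := by simp [Fintype.card_ne_zero]
  by_cases hX : X.trace = 0
  · have := hf (X + 1) (by rwa [trace_add, hX, zero_add])
    rwa [map_add, hf 1 h₁, add_zero] at this
  · exact hf X hX

section KroneckerCommutant

variable {a b : Type*} [Fintype a] [Fintype b] [DecidableEq a] [DecidableEq b]

lemma exists_eq_kronecker_one_of_forall_commute {R : Type*} [CommSemiring R]
    {X : Matrix (a × b) (a × b) R} (h : ∀ Y : Matrix b b R, Commute X ((1 : Matrix a a R) ⊗ₖ Y)) :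
    ∃ G : Matrix a a R, X = G ⊗ₖ (1 : Matrix b b R) := by
  have hblock : ∀ Y : Matrix b b R,
      (compRingEquiv a b R).symm ((1 : Matrix a a R) ⊗ₖ Y) = diagonal fun _ => Y := by
    intro Y
    ext x y i j
    by_cases hxy : x = y <;> simp [compRingEquiv_symm_apply, one_apply, hxy]
  set X' := (compRingEquiv a b R).symm X
  have hentry : ∀ x y (Y : Matrix b b R), Commute Y (X' x y) := by
    intro x y Y
    have := congrFun (congrFun ((h Y).map (compRingEquiv a b R).symm) x) y
    rw [hblock] at this
    simpa only [Commute, SemiconjBy, mul_diagonal, diagonal_mul] using this.symm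
  choose g hg using fun x y =>
    mem_range_scalar_of_commute_single fun i j _ => hentry x y (single i j 1)
  refine ⟨Matrix.of g, ?_⟩
  ext ⟨x, i⟩ ⟨y, j⟩
  have := congrFun (congrFun (hg x y) i) j
  simp only [X', compRingEquiv_symm_apply, comp_symm_apply] at this
  rw [← this]
  by_cases hij : i = j <;> simp [hij]

lemma exists_eq_kronecker_of_mul_kronecker_eq {R : Type*} [CommRing R] [StarRing R]
    {U : Matrix b b R} (hU : U ∈ unitaryGroup b R) {X : Matrix (a × b) (a × b) R}
    (h : ∀ Y : Matrix b b R, X * ((1 : Matrix a a R) ⊗ₖ Y) = (1 ⊗ₖ (U * Y * Uᴴ)) * X) :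
    ∃ G : Matrix a a R, X = G ⊗ₖ U := by
  have hU₁ : Uᴴ * U = 1 := mem_unitaryGroup_iff'.1 hU
  have hU₂ : U * Uᴴ = 1 := mem_unitaryGroup_iff.1 hU
  have hmul : ∀ Y Z : Matrix b b R, (1 : Matrix a a R) ⊗ₖ Y * (1 ⊗ₖ Z) = 1 ⊗ₖ (Y * Z) :=
    fun Y Z => by rw [← mul_kronecker_mul, one_mul]
  obtain ⟨G, hG⟩ := exists_eq_kronecker_one_of_forall_commute
    (X := (1 : Matrix a a R) ⊗ₖ Uᴴ * X) fun Y => by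
      rw [Commute, SemiconjBy, Matrix.mul_assoc, h, ← Matrix.mul_assoc, ← Matrix.mul_assoc,
        hmul, hmul, ← Matrix.mul_assoc, ← Matrix.mul_assoc, hU₁, Matrix.one_mul]
  refine ⟨G, ?_⟩
  calc X = (1 : Matrix a a R) ⊗ₖ U * ((1 : Matrix a a R) ⊗ₖ Uᴴ * X) := by
        rw [← Matrix.mul_assoc, hmul, hU₂, one_kronecker_one, Matrix.one_mul]
    _ = G ⊗ₖ U := by rw [hG, ← mul_kronecker_mul, Matrix.one_mul, Matrix.mul_one]

end KroneckerCommutant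

section Embedding

variable {a b k : Type*}

lemma emb_conjTranspose (A : Matrix a a ℂ) (B : Matrix b b ℂ) :
    (emb A B : Matrix ((a × b) ⊕ k) ((a × b) ⊕ k) ℂ)ᴴ = emb Aᴴ Bᴴ := by
  simp [emb, fromBlocks_conjTranspose, conjTranspose_kronecker]

lemma emb_add_right (A : Matrix a a ℂ) (B B' : Matrix b b ℂ) :
    (emb A (B + B') : Matrix ((a × b) ⊕ k) ((a × b) ⊕ k) ℂ) = emb A B + emb A B' := by
  simp [emb, fromBlocks_add, kronecker_add]

lemma sum_emb_left {C : Type*} [Fintype C] (A : C → Matrix a a ℂ) (B : Matrix b b ℂ) :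
    ∑ c, (emb (A c) B : Matrix ((a × b) ⊕ k) ((a × b) ⊕ k) ℂ) = emb (∑ c, A c) B := by
  ext (⟨x, i⟩ | _) (⟨y, j⟩ | _) <;> simp [emb, Matrix.sum_apply, Finset.sum_mul]

lemma Pm_eq_emb_one_one [DecidableEq a] [DecidableEq b] :
    (Pm : Matrix ((a × b) ⊕ k) ((a × b) ⊕ k) ℂ) = emb 1 1 := by
  rw [emb, Pm, one_kronecker_one]

lemma Pm_conjTranspose [DecidableEq a] [DecidableEq b] :
    (Pm : Matrix ((a × b) ⊕ k) ((a × b) ⊕ k) ℂ)ᴴ = Pm := by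
  rw [Pm_eq_emb_one_one, emb_conjTranspose, conjTranspose_one, conjTranspose_one]

variable [Fintype a]

lemma trA_zero : trA (0 : Matrix ((a × b) ⊕ k) ((a × b) ⊕ k) ℂ) = 0 := by
  ext i j
  simp [trA]

lemma trA_add (M N : Matrix ((a × b) ⊕ k) ((a × b) ⊕ k) ℂ) :
    trA (M + N) = trA M + trA N := by
  ext i j
  simp [trA, Finset.sum_add_distrib]

lemma trA_emb (A : Matrix a a ℂ) (B : Matrix b b ℂ) :
    trA (emb A B : Matrix ((a × b) ⊕ k) ((a × b) ⊕ k) ℂ) = A.trace • B := by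
  ext i j
  simp [trA, emb, trace, Finset.sum_mul]

variable [Fintype b] [Fintype k]

lemma emb_mul (A A' : Matrix a a ℂ) (B B' : Matrix b b ℂ) :
    (emb A B * emb A' B' : Matrix ((a × b) ⊕ k) ((a × b) ⊕ k) ℂ) = emb (A * A') (B * B') := by
  simp [emb, fromBlocks_multiply, mul_kronecker_mul]

lemma trace_emb (A : Matrix a a ℂ) (B : Matrix b b ℂ) :
    (emb A B : Matrix ((a × b) ⊕ k) ((a × b) ⊕ k) ℂ).trace = A.trace * B.trace := by
  rw [emb, ← trace_kronecker]
  simp [trace, Fintype.sum_sum_type]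

variable [DecidableEq a]

lemma trace_mul_emb_one (M : Matrix ((a × b) ⊕ k) ((a × b) ⊕ k) ℂ) (Y : Matrix b b ℂ) :
    (M * emb 1 Y).trace = (trA M * Y).trace := by
  simp only [trace, emb, trA, diag_apply, mul_apply, Fintype.sum_sum_type, Fintype.sum_prod_type,
    fromBlocks_apply₁₁, fromBlocks_apply₁₂, fromBlocks_apply₂₁, fromBlocks_apply₂₂,
    kroneckerMap_apply, one_apply, Matrix.zero_apply, ite_mul, one_mul, zero_mul, mul_ite,
    mul_zero, Finset.sum_ite_irrel, Finset.sum_const_zero, Finset.sum_ite_eq', Finset.mem_univ,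
    ↓reduceIte, add_zero, Finset.sum_mul]
  rw [Finset.sum_comm]
  exact Finset.sum_congr rfl fun _ _ => Finset.sum_comm

variable [DecidableEq b]

lemma Pm_mul_mul_Pm (M : Matrix ((a × b) ⊕ k) ((a × b) ⊕ k) ℂ) :
    Pm * M * Pm = fromBlocks M.toBlocks₁₁ 0 0 0 := by
  conv_lhs => rw [← fromBlocks_toBlocks M]
  simp [Pm, fromBlocks_multiply]

lemma Pm_mul_emb_mul_Pm (A : Matrix a a ℂ) (B : Matrix b b ℂ) :
    Pm * emb A B * Pm = (emb A B : Matrix ((a × b) ⊕ k) ((a × b) ⊕ k) ℂ) := by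
  rw [Pm_eq_emb_one_one, emb_mul, emb_mul, Matrix.one_mul, Matrix.one_mul, Matrix.mul_one,
    Matrix.mul_one]

lemma trA_Pm_mul_mul_Pm (M : Matrix ((a × b) ⊕ k) ((a × b) ⊕ k) ℂ) :
    trA (Pm * M * Pm) = trA M := by
  ext i j
  simp [Pm_mul_mul_Pm, trA, toBlocks₁₁]

end Embedding

section KrausChannel

variable {a b k : Type*} [Fintype a] [Fintype b] [Fintype k] [DecidableEq a] [DecidableEq b]
  {C : Type*} [Fintype C] {E : C → Matrix ((a × b) ⊕ k) ((a × b) ⊕ k) ℂ} {U : Matrix b b ℂ}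

lemma krausMap_emb_of_mul_Pm_eq_emb {G : C → Matrix a a ℂ} (hG : ∀ c, E c * Pm = emb (G c) U)
    (σA : Matrix a a ℂ) (σB : Matrix b b ℂ) :
    krausMap E (emb σA σB) = emb (∑ c, G c * σA * (G c)ᴴ) (U * σB * Uᴴ) := by
  rw [krausMap_apply, ← sum_emb_left]
  refine Finset.sum_congr rfl fun c _ => ?_
  calc E c * emb σA σB * (E c)ᴴ = E c * (Pm * emb σA σB * Pm) * (E c)ᴴ := by
        rw [Pm_mul_emb_mul_Pm]
    _ = E c * Pm * emb σA σB * (E c * Pm)ᴴ := by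
        rw [conjTranspose_mul, Pm_conjTranspose]
        simp only [Matrix.mul_assoc]
    _ = emb (G c * σA * (G c)ᴴ) (U * σB * Uᴴ) := by
        rw [hG, emb_conjTranspose, emb_mul, emb_mul]

lemma sum_conj_emb_of_trA_compression (hU : U ∈ unitaryGroup b ℂ)
    (Hc : ∀ ρ : Matrix ((a × b) ⊕ k) ((a × b) ⊕ k) ℂ,
      trA (Pm * krausMap E (Pm * ρ * Pm) * Pm) = U * trA (Pm * ρ * Pm) * Uᴴ)
    (Y : Matrix b b ℂ) :
    ∑ c, (E c * Pm)ᴴ * emb 1 (U * Y * Uᴴ) * (E c * Pm) = emb 1 Y := by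
  have hU₁ : Uᴴ * U = 1 := mem_unitaryGroup_iff'.1 hU
  have hsum : ∀ X, ∑ c, (E c * Pm)ᴴ * X * (E c * Pm) = Pm * (∑ c, (E c)ᴴ * X * E c) * Pm := by
    intro X
    simp only [conjTranspose_mul, Pm_conjTranspose, Finset.mul_sum, Finset.sum_mul,
      Matrix.mul_assoc]
  rw [ext_iff_trace_mul_left]
  intro M
  calc (M * ∑ c, (E c * Pm)ᴴ * emb 1 (U * Y * Uᴴ) * (E c * Pm)).trace
      = (krausMap E (Pm * M * Pm) * emb 1 (U * Y * Uᴴ)).trace := by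
        rw [hsum, trace_krausMap_mul, trace_mul_sandwich]
    _ = (U * trA (Pm * M * Pm) * Uᴴ * (U * Y * Uᴴ)).trace := by
        rw [trace_mul_emb_one, ← trA_Pm_mul_mul_Pm, Hc]
    _ = (trA (Pm * M * Pm) * Y).trace := by
        rw [show U * trA (Pm * M * Pm) * Uᴴ * (U * Y * Uᴴ) = U * (trA (Pm * M * Pm) * Y) * Uᴴ by
          simp only [Matrix.mul_assoc, ← Matrix.mul_assoc Uᴴ U, hU₁, Matrix.one_mul],
          trace_mul_cycle, hU₁, Matrix.one_mul]
    _ = (M * emb 1 Y).trace := by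
        rw [← trace_mul_emb_one, ← trace_mul_sandwich, Pm_mul_emb_mul_Pm]

variable [DecidableEq k]

lemma exists_eq_emb_of_mul_emb_eq (hU : U ∈ unitaryGroup b ℂ)
    {L : Matrix ((a × b) ⊕ k) ((a × b) ⊕ k) ℂ} (hL : L * Pm = L)
    (h : ∀ Y : Matrix b b ℂ, L * emb 1 Y = emb 1 (U * Y * Uᴴ) * L) :
    ∃ G : Matrix a a ℂ, L = emb G U := by
  have hU₂ : U * Uᴴ = 1 := mem_unitaryGroup_iff.1 hU
  have hPL : Pm * L = L := by
    have := h 1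
    rw [Matrix.mul_one, hU₂, ← Pm_eq_emb_one_one, hL] at this
    exact this.symm
  have hblock : L = fromBlocks L.toBlocks₁₁ 0 0 0 := by rw [← Pm_mul_mul_Pm, hPL, hL]
  obtain ⟨G, hG⟩ := exists_eq_kronecker_of_mul_kronecker_eq hU (X := L.toBlocks₁₁) fun Y => by
    have := h Y
    rw [hblock] at this
    simpa [emb, fromBlocks_multiply] using this
  exact ⟨G, by rw [hblock, hG, emb]⟩

lemma exists_mul_Pm_eq_emb_of_trA_compression (hE : ∑ c, (E c)ᴴ * E c = 1)
    (hU : U ∈ unitaryGroup b ℂ)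
    (Hc : ∀ ρ : Matrix ((a × b) ⊕ k) ((a × b) ⊕ k) ℂ,
      trA (Pm * krausMap E (Pm * ρ * Pm) * Pm) = U * trA (Pm * ρ * Pm) * Uᴴ)
    (c : C) : ∃ G : Matrix a a ℂ, E c * Pm = emb G U := by
  have hU₁ : Uᴴ * U = 1 := mem_unitaryGroup_iff'.1 hU
  have hPm : (Pm : Matrix ((a × b) ⊕ k) ((a × b) ⊕ k) ℂ) * Pm = Pm := by
    rw [Pm_eq_emb_one_one, emb_mul, Matrix.one_mul, Matrix.one_mul]
  have hnorm : ∀ Y : Matrix b b ℂ, (∑ c, (E c * Pm)ᴴ * (E c * Pm)) * emb 1 Y = emb 1 Y := by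
    intro Y
    have : ∑ c, (E c * Pm)ᴴ * (E c * Pm) = Pm * (∑ c, (E c)ᴴ * E c) * Pm := by
      simp only [conjTranspose_mul, Pm_conjTranspose, Finset.mul_sum, Finset.sum_mul,
        Matrix.mul_assoc]
    rw [this, hE, Matrix.mul_one, hPm, Pm_eq_emb_one_one, emb_mul, Matrix.one_mul,
      Matrix.one_mul]
  have hsquare : ∀ Y : Matrix b b ℂ, ∑ c, (E c * Pm)ᴴ * ((emb 1 (U * Y * Uᴴ))ᴴ *
      emb 1 (U * Y * Uᴴ)) * (E c * Pm) = (emb 1 Y)ᴴ * emb 1 Y := by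
    intro Y
    have hUYU : (U * Y * Uᴴ)ᴴ * (U * Y * Uᴴ) = U * (Yᴴ * Y) * Uᴴ := by
      simp only [conjTranspose_mul, conjTranspose_conjTranspose, Matrix.mul_assoc,
        ← Matrix.mul_assoc Uᴴ U, hU₁, Matrix.one_mul]
    rw [emb_conjTranspose, emb_conjTranspose, emb_mul, emb_mul, conjTranspose_one,
      Matrix.one_mul, hUYU, sum_conj_emb_of_trA_compression hU Hc]
  exact exists_eq_emb_of_mul_emb_eq hU (by rw [Matrix.mul_assoc, hPm]) fun Y =>
    mul_eq_mul_of_sum_conjTranspose_mul (hnorm Y) (sum_conj_emb_of_trA_compression hU Hc Y)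
      (hsquare Y) c

lemma trA_krausMap_emb_of_invariant (hE : ∑ c, (E c)ᴴ * E c = 1) (hU : U ∈ unitaryGroup b ℂ)
    (H : ∀ (σA : Matrix a a ℂ) (σB : Matrix b b ℂ),
      ∃ τA : Matrix a a ℂ, krausMap E (emb σA σB) = emb τA (U * σB * Uᴴ))
    (σA : Matrix a a ℂ) (σB : Matrix b b ℂ) :
    trA (krausMap E (emb σA σB)) = σA.trace • (U * σB * Uᴴ) := by
  let f : Matrix b b ℂ →+ Matrix b b ℂ :=
    AddMonoidHom.mk' (fun σB => trA (krausMap E (emb σA σB)) - σA.trace • (U * σB * Uᴴ))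
      fun B B' => by
        simp only [emb_add_right, map_add, trA_add, Matrix.mul_add, Matrix.add_mul, smul_add]
        abel
  refine sub_eq_zero.1 (f.eq_zero_of_forall_trace_ne_zero (fun σB hσB => ?_) σB)
  obtain ⟨τA, hτ⟩ := H σA σB
  have htrace : τA.trace = σA.trace := by
    have hU₁ : Uᴴ * U = 1 := mem_unitaryGroup_iff'.1 hU
    have := trace_krausMap hE (emb σA σB)
    rw [hτ, trace_emb, trace_emb, trace_mul_cycle, hU₁, Matrix.one_mul] at this
    exact mul_right_cancel₀ hσB this
  change trA _ - _ = 0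
  rw [hτ, trA_emb, htrace, sub_self]

lemma trA_compression_krausMap_of_invariant (hE : ∑ c, (E c)ᴴ * E c = 1)
    (hU : U ∈ unitaryGroup b ℂ)
    (H : ∀ (σA : Matrix a a ℂ) (σB : Matrix b b ℂ),
      ∃ τA : Matrix a a ℂ, krausMap E (emb σA σB) = emb τA (U * σB * Uᴴ))
    (ρ : Matrix ((a × b) ⊕ k) ((a × b) ⊕ k) ℂ) :
    trA (Pm * krausMap E (Pm * ρ * Pm) * Pm) = U * trA (Pm * ρ * Pm) * Uᴴ := by
  rw [trA_Pm_mul_mul_Pm, Pm_mul_mul_Pm]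
  induction ρ.toBlocks₁₁ using Matrix.induction_on' with
  | h_zero => simp [trA_zero]
  | h_add p q hp hq =>
    have hsplit : fromBlocks (p + q) 0 0 0 =
        (fromBlocks p 0 0 0 + fromBlocks q 0 0 0 : Matrix ((a × b) ⊕ k) ((a × b) ⊕ k) ℂ) := by
      rw [fromBlocks_add, add_zero, add_zero, add_zero]
    rw [hsplit, map_add, trA_add, trA_add, hp, hq, Matrix.mul_add, Matrix.add_mul]
  | h_std_basis p q z =>
    obtain ⟨x, i⟩ := p
    obtain ⟨y, j⟩ := q
    have hsingle : fromBlocks (single (x, i) (y, j) z) 0 0 0 =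
        (emb (single x y z) (single i j 1) : Matrix ((a × b) ⊕ k) ((a × b) ⊕ k) ℂ) := by
      rw [emb, single_kronecker_single, mul_one]
    rw [hsingle, trA_krausMap_emb_of_invariant hE hU H, trA_emb, Matrix.mul_smul,
      Matrix.smul_mul]

end KrausChannel

section

variable {a b k : Type*} [Fintype a] [Fintype b] [Fintype k]
  [DecidableEq a] [DecidableEq b] [DecidableEq k]

theorem U_invariant_iff_traceA_compression_general
    {C : Type*} [Fintype C]
    (Φ : Matrix ((a × b) ⊕ k) ((a × b) ⊕ k) ℂ →
         Matrix ((a × b) ⊕ k) ((a × b) ⊕ k) ℂ)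
    (E : C → Matrix ((a × b) ⊕ k) ((a × b) ⊕ k) ℂ)
    (hΦ : ∀ ρ, Φ ρ = ∑ c, E c * ρ * (E c)ᴴ)
    (hE : ∑ c, (E c)ᴴ * E c = 1)
    (U : Matrix b b ℂ) (hU : U ∈ Matrix.unitaryGroup b ℂ) :
    (∀ (σA : Matrix a a ℂ) (σB : Matrix b b ℂ),
        ∃ τA : Matrix a a ℂ, Φ (emb σA σB) = emb τA (U * σB * Uᴴ)) ↔
    (∀ ρ : Matrix ((a × b) ⊕ k) ((a × b) ⊕ k) ℂ,
        trA (Pm * Φ (Pm * ρ * Pm) * Pm) = U * trA (Pm * ρ * Pm) * Uᴴ) := by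
  obtain rfl : Φ = krausMap E := funext hΦ
  refine ⟨trA_compression_krausMap_of_invariant hE hU, fun Hc σA σB => ?_⟩
  choose G hG using exists_mul_Pm_eq_emb_of_trA_compression hE hU Hc
  exact ⟨_, krausMap_emb_of_mul_Pm_eq_emb hG σA σB⟩

/-- For a quantum channel `Φ` on `I = (a × b) ⊕ k` and a
unitary `U` on `b`, subsystem `B` is `U`-invariant under `Φ` iff
`Tr_A ∘ 𝒫 ∘ Φ ∘ 𝒫 = 𝒰 ∘ Tr_A ∘ 𝒫`, where `𝒫(ρ) = PρP` and `𝒰(σ) = U σ Uᴴ`. -/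
theorem U_invariant_iff_traceA_compression
    {C : Type*} [Fintype C] [Nonempty a] [Nonempty b] [Nonempty k]
    (Φ : Matrix ((a × b) ⊕ k) ((a × b) ⊕ k) ℂ →
         Matrix ((a × b) ⊕ k) ((a × b) ⊕ k) ℂ)
    (E : C → Matrix ((a × b) ⊕ k) ((a × b) ⊕ k) ℂ)
    (hΦ : ∀ ρ, Φ ρ = ∑ c, E c * ρ * (E c)ᴴ)
    (hE : ∑ c, (E c)ᴴ * E c = 1)
    (U : Matrix b b ℂ) (hU : U ∈ Matrix.unitaryGroup b ℂ) :
    (∀ (σA : Matrix a a ℂ) (σB : Matrix b b ℂ),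
        ∃ τA : Matrix a a ℂ, Φ (emb σA σB) = emb τA (U * σB * Uᴴ)) ↔
    (∀ ρ : Matrix ((a × b) ⊕ k) ((a × b) ⊕ k) ℂ,
        trA (Pm * Φ (Pm * ρ * Pm) * Pm) = U * trA (Pm * ρ * Pm) * Uᴴ) :=
  U_invariant_iff_traceA_compression_general Φ E hΦ hE U hU

end
end
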